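/- Verification soundness: in the CS_lite setting (g₁ of prime order q, g₂ = g₁^t, t ≠ 0), let c̄ = (g₁^{r₁}, g₂^{r₂}, u₃) be an ill-formed ciphertext with r₁ ≠ r₂, and for keys skⱼ = (aⱼ, bⱼ) (aⱼ = a₁ + (b₁ − bⱼ)t, bⱼ pairwise distinct) define ȳⱼ' = Dec(skⱼ, c̄). Then the assignment j ↦ ȳⱼ' is injective; hence there is at most one index j with Dec(skⱼ, c̄) = ȳⱼ', and the verification procedure V identifies the authorized user uniquely. -/
import Mathlib

lemma pow_val_mul {G : Type*} [CommGroup G] {q : ℕ} (hq : q.Prime)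
    (g : G) (hord : orderOf g = q) (x y : ZMod q) :
    (g ^ x.val) ^ y.val = g ^ (x * y).val := by
  haveI : NeZero q := ⟨hq.ne_zero⟩
  rw [← pow_mul, pow_eq_pow_iff_modEq, hord, ← ZMod.natCast_eq_natCast_iff]
  push_cast
  simp [ZMod.natCast_val, ZMod.cast_id]

/-- Verification soundness: for an ill-formed ciphertext
`(g₁^{r₁}, g₂^{r₂}, u₃)` with `r₁ ≠ r₂`, the assignment sending a key index `j`
to the decryption `ȳⱼ' = Dec(skⱼ, c̄)` is injective, so the verification
procedure identifies at most one authorized user. -/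
theorem stmt_18 {G : Type*} [CommGroup G] {q : ℕ} (hq : q.Prime)
    (g₁ : G) (hord : orderOf g₁ = q)
    (t : ZMod q) (ht : t ≠ 0) (g₂ : G) (hg₂ : g₂ = g₁ ^ t.val)
    (a₁ b₁ : ZMod q)
    {P : ℕ} (a b : Fin P → ZMod q) (hb : Function.Injective b)
    (ha : ∀ j, a j = a₁ + (b₁ - b j) * t)
    (r₁ r₂ : ZMod q) (hr : r₁ ≠ r₂) (u₃ : G) :
    Function.Injective
      (fun j : Fin P =>
        u₃ / ((g₁ ^ r₁.val) ^ (a j).val * (g₂ ^ r₂.val) ^ (b j).val)) := by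
  haveI : Fact q.Prime := ⟨hq⟩
  haveI : NeZero q := ⟨hq.ne_zero⟩
  have key : ∀ j : Fin P,
      (g₁ ^ r₁.val) ^ (a j).val * (g₂ ^ r₂.val) ^ (b j).val
        = g₁ ^ (r₁ * a j + t * r₂ * b j).val := by
    intro j
    rw [hg₂, pow_val_mul hq g₁ hord r₁ (a j), pow_val_mul hq g₁ hord t r₂,
      pow_val_mul hq g₁ hord (t * r₂) (b j), ← pow_add,
      pow_eq_pow_iff_modEq, hord, ← ZMod.natCast_eq_natCast_iff]
    push_cast
    simp [ZMod.natCast_val, ZMod.cast_id, mul_assoc]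
  intro i j hij
  simp only [key] at hij
  replace hij := div_right_injective hij
  have hexp : r₁ * a i + t * r₂ * b i = r₁ * a j + t * r₂ * b j := by
    have := pow_eq_pow_iff_modEq.mp hij
    rw [hord, ← ZMod.natCast_eq_natCast_iff] at this
    simpa [ZMod.natCast_val, ZMod.cast_id] using this
  apply hb
  have h2 : t * (r₂ - r₁) * b i = t * (r₂ - r₁) * b j := by
    rw [ha i, ha j] at hexp
    ring_nf at hexp ⊢
    linear_combination hexp
  have hne : t * (r₂ - r₁) ≠ 0 :=
    mul_ne_zero ht (sub_ne_zero.mpr (Ne.symm hr))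
  exact mul_left_cancel₀ hne h2
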